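/- Consider the isoperimetric problem of minimizing J(x) = ∫₀¹ ( t⁴ + ( ₀D_t^{1/2} x(t) )² ) dt over functions x: [0,1] → ℝ possessing a square-integrable Riemann–Liouville derivative of order 1/2 on (0,1], satisfying x(0) = 0, x(1) = 16/(15·Γ(1/2)), and the constraint ∫₀¹ t²·₀D_t^{1/2} x(t) dt = 1/5. Then x(t) = 16·t^{5/2}/(15·Γ(1/2)) is admissible (its fractional derivative is t², it satisfies the boundary conditions and the constraint), J(x) = 2/5, and J(y) ≥ 2/5 for every admissible y; hence x is a global minimizer. -/

import Mathlib

/-!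
Substituting `τ = s u` turns the Riemann–Liouville integral of a power into a Beta integral,
`∫₀ˢ τ^β (s-τ)^(-α) dτ = B(β+1, 1-α) s^(β+1-α)`, so `₀D_t^α t^β = Γ(β+1)/Γ(β+1-α) t^(β-α)`;
with `α = 1/2`, `β = 5/2` and the normalising constant of `xStar` this is `t²`.

For the lower bound write `g = ₀D_t^{1/2} y`. Then
`0 ≤ ∫₀¹ (g - t²)² = ∫₀¹ g² - 2 ∫₀¹ t² g + ∫₀¹ t⁴ = ∫₀¹ g² - 1/5` by the constraint,
hence `J y = 1/5 + ∫₀¹ g² ≥ 2/5`.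
-/

open MeasureTheory intervalIntegral

/-- The left Riemann–Liouville fractional derivative of order `α` with base
point `a`: `ₐD_t^α x(t) = (1/Γ(1-α)) · d/dt ∫ₐ^t x(τ)(t-τ)^(-α) dτ`. -/
noncomputable def RLderiv (α a : ℝ) (x : ℝ → ℝ) (t : ℝ) : ℝ :=
  (1 / Real.Gamma (1 - α)) *
    deriv (fun s => ∫ τ in a..s, x τ * (s - τ) ^ (-α)) t

/-- The functional of the isoperimetric problem (Example 3):
`J(x) = ∫₀¹ (t⁴ + (₀D_t^{1/2} x(t))²) dt`. -/
noncomputable def J (x : ℝ → ℝ) : ℝ :=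
  ∫ t in (0:ℝ)..1, (t ^ 4 + (RLderiv (1/2) 0 x t) ^ 2)

/-- Admissibility for the isoperimetric problem: the Riemann–Liouville
derivative of order `1/2` exists on `(0,1]` and is square-integrable, the
boundary conditions `x(0) = 0`, `x(1) = 16/(15Γ(1/2))` hold, and the integral
constraint `∫₀¹ t²·₀D_t^{1/2} x(t) dt = 1/5` is satisfied. -/
def Admissible (x : ℝ → ℝ) : Prop :=
  (∀ t ∈ Set.Ioc (0:ℝ) 1,
      DifferentiableAt ℝ (fun s => ∫ τ in (0:ℝ)..s, x τ * (s - τ) ^ (-(1/2:ℝ))) t) ∧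
  IntervalIntegrable (fun t => (RLderiv (1/2) 0 x t) ^ 2) volume 0 1 ∧
  x 0 = 0 ∧ x 1 = 16 / (15 * Real.Gamma (1/2)) ∧
  ∫ t in (0:ℝ)..1, t ^ 2 * RLderiv (1/2) 0 x t = 1/5

/-- The candidate minimizer of Example 3: `x(t) = 16·t^{5/2}/(15·Γ(1/2))`. -/
noncomputable def xStar (t : ℝ) : ℝ := 16 * t ^ ((5:ℝ)/2) / (15 * Real.Gamma (1/2))

open Set Filter Topology ProbabilityTheory

theorem integral_rpow_mul_sub_rpow {a b s : ℝ} (ha : 0 < a) (hb : 0 < b) (hs : 0 < s) :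
    ∫ τ in (0:ℝ)..s, τ ^ (a - 1) * (s - τ) ^ (b - 1) = s ^ (a + b - 1) * beta a b := by
  have hbeta : Complex.betaIntegral a b = (beta a b : ℂ) := by
    rw [Complex.betaIntegral_eq_Gamma_mul_div _ _ (by simpa) (by simpa), beta,
      ← Complex.ofReal_add, Complex.Gamma_ofReal, Complex.Gamma_ofReal, Complex.Gamma_ofReal]
    push_cast; rfl
  apply Complex.ofReal_injective
  rw [← intervalIntegral.integral_ofReal, Complex.ofReal_mul, Complex.ofReal_cpow hs.le,
    ← hbeta]
  push_cast
  rw [← Complex.betaIntegral_scaled _ _ hs]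
  refine intervalIntegral.integral_congr fun τ hτ => ?_
  rw [uIcc_of_le hs.le] at hτ
  rw [Complex.ofReal_cpow hτ.1, Complex.ofReal_cpow (sub_nonneg.2 hτ.2)]
  push_cast; rfl

theorem hasDerivAt_integral_const_mul_rpow_mul_sub_rpow {α β c t : ℝ} (hα : α < 1)
    (hβ : -1 < β) (ht : 0 < t) :
    HasDerivAt (fun s => ∫ τ in (0:ℝ)..s, c * τ ^ β * (s - τ) ^ (-α))
      (c * beta (β + 1) (1 - α) * ((β + 1 - α) * t ^ (β - α))) t := by
  have hint : (fun s => ∫ τ in (0:ℝ)..s, c * τ ^ β * (s - τ) ^ (-α)) =ᶠ[𝓝 t]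
      fun s => c * beta (β + 1) (1 - α) * s ^ (β + 1 - α) := by
    filter_upwards [Ioi_mem_nhds ht] with s hs
    have h := integral_rpow_mul_sub_rpow (a := β + 1) (b := 1 - α) (by linarith) (by linarith) hs
    rw [add_sub_cancel_right, sub_sub_cancel_left,
      show β + 1 + (1 - α) - 1 = β + 1 - α by ring] at h
    simp_rw [mul_assoc, intervalIntegral.integral_const_mul, h]
    ring
  have hpow := Real.hasDerivAt_rpow_const (x := t) (p := β + 1 - α) (Or.inl ht.ne')
  rw [show β + 1 - α - 1 = β - α by ring] at hpow
  exact (hpow.const_mul _).congr_of_eventuallyEq hint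

theorem RLderiv_const_mul_rpow {α β t : ℝ} (c : ℝ) (hα : α < 1) (hβ : -1 < β)
    (hαβ : α < β + 1) (ht : 0 < t) :
    RLderiv α 0 (fun τ => c * τ ^ β) t
      = c * Real.Gamma (β + 1) / Real.Gamma (β + 1 - α) * t ^ (β - α) := by
  have hpos : 0 < β + 1 - α := sub_pos.2 hαβ
  rw [RLderiv, (hasDerivAt_integral_const_mul_rpow_mul_sub_rpow hα hβ ht).deriv, beta,
    show β + 1 + (1 - α) = (β + 1 - α) + 1 by ring, Real.Gamma_add_one hpos.ne']
  have := (Real.Gamma_pos_of_pos hpos).ne'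
  have := (Real.Gamma_pos_of_pos (sub_pos.2 hα)).ne'
  field_simp

theorem Real.Gamma_seven_halves : Real.Gamma (7 / 2) = 15 / 8 * Real.Gamma (1 / 2) := by
  rw [show (7 / 2 : ℝ) = 1 / 2 + 1 + 1 + 1 by norm_num, Real.Gamma_add_one (by norm_num),
    Real.Gamma_add_one (by norm_num), Real.Gamma_add_one (by norm_num)]
  ring

theorem xStar_eq : xStar = fun t => 16 / (15 * Real.Gamma (1 / 2)) * t ^ ((5 : ℝ) / 2) := by
  funext t
  rw [xStar]
  ring

theorem RLderiv_xStar {t : ℝ} (ht : 0 < t) : RLderiv (1 / 2) 0 xStar t = t ^ 2 := by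
  rw [xStar_eq, RLderiv_const_mul_rpow _ (by norm_num) (by norm_num) (by norm_num) ht,
    show (5 / 2 + 1 : ℝ) = 7 / 2 by norm_num, Real.Gamma_seven_halves,
    show (7 / 2 - 1 / 2 : ℝ) = (2 : ℕ) + 1 by norm_num, Real.Gamma_nat_eq_factorial,
    show (5 / 2 - 1 / 2 : ℝ) = (2 : ℕ) by norm_num, Real.rpow_natCast]
  have := (Real.Gamma_pos_of_pos (one_half_pos (α := ℝ))).ne'
  field_simp
  norm_num [Nat.factorial]

theorem differentiableAt_RL_integral_xStar {t : ℝ} (ht : 0 < t) :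
    DifferentiableAt ℝ (fun s => ∫ τ in (0:ℝ)..s, xStar τ * (s - τ) ^ (-(1/2:ℝ))) t := by
  rw [xStar_eq]
  exact (hasDerivAt_integral_const_mul_rpow_mul_sub_rpow (by norm_num) (by norm_num)
    ht).differentiableAt

theorem IntervalIntegrable.mul_of_sq {f g : ℝ → ℝ} {μ : Measure ℝ} {a b : ℝ}
    (hfm : AEStronglyMeasurable f μ) (hgm : AEStronglyMeasurable g μ)
    (hf : IntervalIntegrable (fun t => f t ^ 2) μ a b)
    (hg : IntervalIntegrable (fun t => g t ^ 2) μ a b) :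
    IntervalIntegrable (fun t => f t * g t) μ a b := by
  refine (hf.add hg).mono_fun (hfm.mul hgm).restrict (ae_of_all _ fun t => ?_)
  simp only [Real.norm_eq_abs, abs_mul]
  rw [abs_of_nonneg (by positivity : 0 ≤ f t ^ 2 + g t ^ 2)]
  nlinarith [sq_nonneg (|f t| - |g t|), sq_abs (f t), sq_abs (g t)]

theorem two_mul_integral_mul_sub_integral_sq_le {f g : ℝ → ℝ} {μ : Measure ℝ} {a b : ℝ}
    (hab : a ≤ b) (hf : IntervalIntegrable (fun t => f t ^ 2) μ a b)
    (hg : IntervalIntegrable (fun t => g t ^ 2) μ a b)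
    (hfg : IntervalIntegrable (fun t => f t * g t) μ a b) :
    2 * (∫ t in a..b, f t * g t ∂μ) - ∫ t in a..b, f t ^ 2 ∂μ
      ≤ ∫ t in a..b, g t ^ 2 ∂μ := by
  have hexpand : ∫ t in a..b, (g t - f t) ^ 2 ∂μ
      = (∫ t in a..b, g t ^ 2 ∂μ) - 2 * (∫ t in a..b, f t * g t ∂μ)
        + ∫ t in a..b, f t ^ 2 ∂μ := by
    rw [← intervalIntegral.integral_const_mul,
      ← intervalIntegral.integral_sub hg (hfg.const_mul 2),
      ← intervalIntegral.integral_add (hg.sub (hfg.const_mul 2)) hf]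
    congr 1 with t
    ring
  have := integral_nonneg_of_forall hab (μ := μ) fun t => sq_nonneg (g t - f t)
  linarith

theorem integral_sq_sq_zero_one : ∫ t in (0:ℝ)..1, (t ^ 2) ^ 2 = 1 / 5 := by
  simp_rw [← pow_mul]
  norm_num [integral_pow]

theorem J_eq {y : ℝ → ℝ}
    (hy : IntervalIntegrable (fun t => RLderiv (1/2) 0 y t ^ 2) volume 0 1) :
    J y = 1 / 5 + ∫ t in (0:ℝ)..1, RLderiv (1/2) 0 y t ^ 2 := by
  rw [J, intervalIntegral.integral_add ((continuous_pow 4).intervalIntegrable 0 1) hy]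
  norm_num [integral_pow]

theorem two_fifths_le_J {y : ℝ → ℝ} (hy : Admissible y) : 2 / 5 ≤ J y := by
  obtain ⟨-, hsq, -, -, hconstr⟩ := hy
  have hmeas : Measurable (RLderiv (1/2) 0 y) := (measurable_deriv _).const_mul _
  have hf : IntervalIntegrable (fun t : ℝ => (t ^ 2) ^ 2) volume 0 1 :=
    (by fun_prop : Continuous _).intervalIntegrable 0 1
  have hfg := hf.mul_of_sq (by fun_prop) hmeas.aestronglyMeasurable hsq
  have := two_mul_integral_mul_sub_integral_sq_le zero_le_one hf hsq hfg
  rw [hconstr, integral_sq_sq_zero_one] at this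
  rw [J_eq hsq]
  linarith

theorem RLderiv_xStar_eqOn : EqOn (RLderiv (1/2) 0 xStar) (fun t => t ^ 2) (Ioo 0 1) :=
  fun _ ht => RLderiv_xStar ht.1

theorem admissible_xStar : Admissible xStar := by
  refine ⟨fun t ht => differentiableAt_RL_integral_xStar ht.1, ?_, ?_, ?_, ?_⟩
  · refine IntervalIntegrable.congr_uIoo (f := fun t : ℝ => (t ^ 2) ^ 2)
      ((by fun_prop : Continuous _).intervalIntegrable 0 1) ?_
    rw [uIoo_of_le zero_le_one]
    exact fun t ht => by simp only [RLderiv_xStar_eqOn ht]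
  · simp [xStar]
  · simp [xStar]
  · rw [intervalIntegral.integral_congr_Ioo_of_le zero_le_one
      (g := fun t => (t ^ 2) ^ 2) fun t ht => by simp only [RLderiv_xStar_eqOn ht]; ring]
    exact integral_sq_sq_zero_one

theorem J_xStar : J xStar = 2 / 5 := by
  rw [J_eq admissible_xStar.2.1, intervalIntegral.integral_congr_Ioo_of_le zero_le_one
    (g := fun t => (t ^ 2) ^ 2) fun t ht => by simp only [RLderiv_xStar_eqOn ht],
    integral_sq_sq_zero_one]
  norm_num

/-- `x(t) = 16·t^{5/2}/(15Γ(1/2))` is admissible for the isoperimetric problem,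
its `1/2`-order Riemann–Liouville derivative on `(0,1]` is `t²`, `J(x) = 2/5`,
and `J(y) ≥ 2/5` for every admissible `y`; hence `x` is a global minimizer. -/
theorem isoperimetric_global_minimizer :
    (∀ t ∈ Set.Ioc (0:ℝ) 1, RLderiv (1/2) 0 xStar t = t ^ 2) ∧
    Admissible xStar ∧
    J xStar = 2/5 ∧
    ∀ y, Admissible y → 2/5 ≤ J y :=
  ⟨fun _ ht => RLderiv_xStar ht.1, admissible_xStar, J_xStar, fun _ => two_fifths_le_J⟩
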